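/- The map x ↦ (x, 0) from ℤ to the additive group ℤ × ℚ is an elementary embedding of L_grp-structures: for every L_grp-formula φ(x̄) and every tuple ā of integers, φ(ā) holds in (ℤ, +) if and only if φ((a₁,0),…,(a_r,0)) holds in (ℤ × ℚ, +). -/

import Mathlib

open FirstOrder

/-- Function symbols of the first-order language of groups: a binary multiplication,
a unary inversion, and a constant for the identity. -/
inductive GrpFunc : ℕ → Type
  | mul : GrpFunc 2
  | inv : GrpFunc 1
  | one : GrpFunc 0

/-- The first-order language of groups. -/
def Lgrp : FirstOrder.Language :=
  ⟨GrpFunc, fun _ => Empty⟩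

/-- Every additive group is an `Lgrp`-structure in the natural way: the group
multiplication is interpreted as addition, inversion as negation, and the identity
as `0`. -/
instance (G : Type*) [AddGroup G] : Lgrp.Structure G where
  funMap {_} f args :=
    match f with
    | .mul => args 0 + args 1
    | .inv => -(args 0)
    | .one => 0
  RelMap {_} r _ := r.elim

set_option linter.unusedSectionVars false

namespace IntProdRatAux
open Finset

section Helpers
variable {ι : Type*} [Fintype ι]

def DZ (c v : ι → ℤ) : ℤ := ∑ i, c i * v i
def AZ (c : ι → ℤ) (w : ι → ℤ × ℚ) : ℤ := ∑ i, c i * (w i).1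
def QZ (c : ι → ℤ) (w : ι → ℤ × ℚ) : ℚ := ∑ i, (c i : ℚ) * (w i).2

def ZRel (N : ℕ) (v : ι → ℤ) (w : ι → ℤ × ℚ) : Prop :=
  ∀ c : ι → ℤ, (∀ i, |c i| ≤ (N : ℤ)) →
    ((DZ c v = 0 ↔ AZ c w = 0 ∧ QZ c w = 0) ∧
      ∀ m : ℕ, 1 ≤ m → m ≤ N → (m : ℤ) ∣ (DZ c v - AZ c w))

lemma DZ_comb (d e : ℤ) (c c' v : ι → ℤ) :
    DZ (fun i => d * c i + e * c' i) v = d * DZ c v + e * DZ c' v := by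
  simp [DZ, Finset.mul_sum, ← Finset.sum_add_distrib, add_mul, mul_assoc]

lemma AZ_comb (d e : ℤ) (c c' : ι → ℤ) (w : ι → ℤ × ℚ) :
    AZ (fun i => d * c i + e * c' i) w = d * AZ c w + e * AZ c' w := by
  simp [AZ, Finset.mul_sum, ← Finset.sum_add_distrib, add_mul, mul_assoc]

lemma QZ_comb (d e : ℤ) (c c' : ι → ℤ) (w : ι → ℤ × ℚ) :
    QZ (fun i => d * c i + e * c' i) w = (d:ℚ) * QZ c w + (e:ℚ) * QZ c' w := by
  simp [QZ, Finset.mul_sum, ← Finset.sum_add_distrib, add_mul, mul_assoc]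

def extO {α : Type*} (z : α) (v : ι → α) : Option ι → α := fun o => o.elim z v

@[simp] lemma extO_none {α : Type*} (z : α) (v : ι → α) : extO z v none = z := rfl
@[simp] lemma extO_some {α : Type*} (z : α) (v : ι → α) (i : ι) : extO z v (some i) = v i := rfl

lemma DZ_neg (c v : ι → ℤ) : DZ (fun i => -(c i)) v = -DZ c v := by
  simp [DZ]

lemma AZ_neg (c : ι → ℤ) (w : ι → ℤ × ℚ) : AZ (fun i => -(c i)) w = -AZ c w := by
  simp [AZ]

lemma QZ_neg (c : ι → ℤ) (w : ι → ℤ × ℚ) : QZ (fun i => -(c i)) w = -QZ c w := by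
  simp [QZ]

lemma DZ_option (c : Option ι → ℤ) (z : ℤ) (v : ι → ℤ) :
    DZ c (extO z v) = c none * z + DZ (fun i => c (some i)) v := by
  simp [DZ, extO, Fintype.sum_option]

lemma AZ_option (c : Option ι → ℤ) (b : ℤ × ℚ) (w : ι → ℤ × ℚ) :
    AZ c (extO b w) = c none * b.1 + AZ (fun i => c (some i)) w := by
  simp [AZ, extO, Fintype.sum_option]

lemma QZ_option (c : Option ι → ℤ) (b : ℤ × ℚ) (w : ι → ℤ × ℚ) :
    QZ c (extO b w) = (c none : ℚ) * b.2 + QZ (fun i => c (some i)) w := by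
  simp [QZ, extO, Fintype.sum_option]

/-- Key extension lemma: if the new elements `z` and `b` satisfy `d * z = c ∙ v` and
`d • b = c ∙ w` for a common small `d` and small `c`, then the extended tuples
remain related at precision `N`. -/
lemma zrel_extend {N : ℕ} {v : ι → ℤ} {w : ι → ℤ × ℚ}
    (h : ZRel (2 * N ^ 2) v w)
    {d : ℤ} (hd1 : 1 ≤ d) (hdN : d ≤ (N : ℤ)) {c : ι → ℤ} (hc : ∀ i, |c i| ≤ (N : ℤ))
    {z : ℤ} {b : ℤ × ℚ} (hz : d * z = DZ c v) (hb1 : d * b.1 = AZ c w)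
    (hb2 : (d : ℚ) * b.2 = QZ c w) :
    ZRel N (extO z v) (extO b w) := by
  have hd0 : d ≠ 0 := by omega
  have hdQ0 : (d : ℚ) ≠ 0 := by exact_mod_cast hd0
  intro c' hc'
  set e : ℤ := c' none with he
  set c₀ : ι → ℤ := fun i => c' (some i) with hc₀def
  have hec : |e| ≤ (N : ℤ) := hc' none
  have hc₀ : ∀ i, |c₀ i| ≤ (N : ℤ) := fun i => hc' (some i)
  set c₁ : ι → ℤ := fun i => d * c₀ i + e * c i with hc₁def
  have hc₁bound : ∀ i, |c₁ i| ≤ ((2 * N ^ 2 : ℕ) : ℤ) := by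
    intro i
    have h1 : |d * c₀ i| ≤ (N : ℤ) * N :=
      (abs_mul _ _).le.trans (mul_le_mul (by rwa [abs_of_pos (by omega)]) (hc₀ i)
        (abs_nonneg _) (by positivity))
    have h2 : |e * c i| ≤ (N : ℤ) * N :=
      (abs_mul _ _).le.trans (mul_le_mul hec (hc i) (abs_nonneg _) (by positivity))
    calc |c₁ i| ≤ |d * c₀ i| + |e * c i| := abs_add_le _ _
      _ ≤ (N:ℤ) * N + (N:ℤ) * N := add_le_add h1 h2
      _ = ((2 * N ^ 2 : ℕ) : ℤ) := by push_cast; ring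
  have key := h c₁ hc₁bound
  have hD1 : DZ c₁ v = d * (DZ c' (extO z v)) := by
    rw [hc₁def, DZ_comb, DZ_option, ← hz]; ring
  have hA1 : AZ c₁ w = d * (AZ c' (extO b w)) := by
    rw [hc₁def, AZ_comb, AZ_option, ← hb1]; ring
  have hQ1 : QZ c₁ w = (d:ℚ) * (QZ c' (extO b w)) := by
    rw [hc₁def, QZ_comb, QZ_option, ← hb2]; ring
  constructor
  · rw [show (DZ c' (extO z v) = 0 ↔ AZ c' (extO b w) = 0 ∧ QZ c' (extO b w) = 0) ↔
        (d * DZ c' (extO z v) = 0 ↔ d * AZ c' (extO b w) = 0 ∧ (d:ℚ) * QZ c' (extO b w) = 0) by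
      constructor <;> intro hh <;>
        simp only [mul_eq_zero, hd0, hdQ0, false_or] at * <;> tauto]
    rw [← hD1, ← hA1, ← hQ1]
    exact key.1
  · intro m hm1 hmN
    have hmd : 1 ≤ m * d.toNat := by
      have : 1 ≤ d.toNat := by omega
      exact Nat.one_le_iff_ne_zero.mpr (by positivity)
    have hmd2 : m * d.toNat ≤ 2 * N ^ 2 := by
      have h1 : d.toNat ≤ N := by omega
      calc m * d.toNat ≤ N * N := Nat.mul_le_mul hmN h1
        _ ≤ 2 * N ^ 2 := by nlinarith
    have := key.2 (m * d.toNat) hmd hmd2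
    have hdt : ((d.toNat : ℤ)) = d := Int.toNat_of_nonneg (by omega)
    rw [hD1, hA1, ← mul_sub] at this
    push_cast [hdt] at this
    rcases this with ⟨y, hy⟩
    refine ⟨y, ?_⟩
    have : d * (DZ c' (extO z v) - AZ c' (extO b w)) = d * ((m:ℤ) * y) := by
      rw [hy]; ring
    exact mul_left_cancel₀ hd0 this
end Helpers


section Steps
variable {ι : Type*} [Fintype ι]

lemma Nle2N2 {N : ℕ} : ((N:ℤ)) ≤ ((2 * N ^ 2 : ℕ) : ℤ) := by push_cast; nlinarith [sq_nonneg (N:ℤ)]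

lemma zrel_back {N : ℕ} (hN : 1 ≤ N) {v : ι → ℤ} {w : ι → ℤ × ℚ}
    (h : ZRel (2 * N ^ 2) v w) (b : ℤ × ℚ) :
    ∃ z : ℤ, ZRel N (extO z v) (extO b w) := by
  by_cases hS : ∃ d : ℤ, ∃ c : ι → ℤ, (1 ≤ d ∧ d ≤ (N:ℤ)) ∧ (∀ i, |c i| ≤ (N:ℤ)) ∧
      d * b.1 = AZ c w ∧ (d:ℚ) * b.2 = QZ c w
  · obtain ⟨d, c, ⟨hd1, hdN⟩, hc, hb1, hb2⟩ := hS
    have hcc : ∀ i, |c i| ≤ ((2*N^2:ℕ):ℤ) := fun i => (hc i).trans Nle2N2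
    have hdvdDA : d ∣ DZ c v - AZ c w := by
      have h2 := (h c hcc).2 d.toNat (by omega)
        (by have h4 : d.toNat ≤ N := by omega
            calc d.toNat ≤ N := h4
              _ ≤ 2 * N ^ 2 := by nlinarith)
      rwa [Int.toNat_of_nonneg (by omega)] at h2
    have hdvdA : d ∣ AZ c w := ⟨b.1, hb1.symm⟩
    have hdvdD : d ∣ DZ c v := by
      have := dvd_add hdvdDA hdvdA
      simpa using this
    obtain ⟨z, hz⟩ := hdvdD
    exact ⟨z, zrel_extend h hd1 hdN hc hz.symm hb1 hb2⟩
  · set L : ℤ := (N.factorial : ℤ) with hLdef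
    have hL1 : 1 ≤ L := by rw [hLdef]; exact_mod_cast N.factorial_pos
    set Bd : ℤ := (N:ℤ) * (∑ i, |v i|) + |b.1| + 1 with hBddef
    have hsum0 : 0 ≤ (N:ℤ) * (∑ i, |v i|) := by positivity
    have hBd : 1 ≤ Bd := by
      rw [hBddef]; have := abs_nonneg b.1; linarith
    set z : ℤ := b.1 + L * Bd with hzdef
    have hzbig : (N:ℤ) * (∑ i, |v i|) < |z| := by
      have h1 : Bd ≤ L * Bd := le_mul_of_one_le_left (by omega) hL1
      have h2 : L * Bd - |b.1| ≤ |z| := by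
        have h5 := abs_sub_abs_le_abs_sub (L * Bd) (-b.1)
        rw [abs_neg, sub_neg_eq_add] at h5
        have h6 : L * Bd + b.1 = z := by rw [hzdef]; ring
        rw [h6] at h5
        have h4 : |L * Bd| = L * Bd := abs_of_pos (by nlinarith)
        linarith
      rw [hBddef] at h2
      have h8 : (0:ℤ) ≤ |b.1| := abs_nonneg _
      have h7 : ((N:ℤ) * ∑ i, |v i| + |b.1| + 1) ≤ L * ((N:ℤ) * ∑ i, |v i| + |b.1| + 1) :=
        le_mul_of_one_le_left (by linarith) hL1
      linarith
    refine ⟨z, ?_⟩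
    intro c' hc'
    have hec : |c' none| ≤ (N:ℤ) := hc' none
    set e : ℤ := c' none with hedef
    obtain ⟨heL, heU⟩ := abs_le.mp hec
    set c₀ : ι → ℤ := fun i => c' (some i) with hc₀def
    have hc₀ : ∀ i, |c₀ i| ≤ (N:ℤ) := fun i => hc' (some i)
    have hc₀2 : ∀ i, |c₀ i| ≤ ((2*N^2:ℕ):ℤ) := fun i => (hc₀ i).trans Nle2N2
    have hDbound : |DZ c₀ v| ≤ (N:ℤ) * ∑ i, |v i| := by
      calc |DZ c₀ v| ≤ ∑ i, |c₀ i * v i| := Finset.abs_sum_le_sum_abs _ _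
        _ ≤ ∑ i, (N:ℤ) * |v i| := Finset.sum_le_sum (fun i _ => by
            rw [abs_mul]; exact mul_le_mul_of_nonneg_right (hc₀ i) (abs_nonneg _))
        _ = (N:ℤ) * ∑ i, |v i| := (Finset.mul_sum _ _ _).symm
    have hnz : e ≠ 0 → e * z + DZ c₀ v ≠ 0 := by
      intro he0 heq
      have h1 : |z| ≤ |e * z| := by
        rw [abs_mul]
        exact le_mul_of_one_le_left (abs_nonneg _) (Int.one_le_abs he0)
      have h2 : e * z = -DZ c₀ v := by linarith
      rw [h2, abs_neg] at h1
      linarith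
    constructor
    · rw [DZ_option, AZ_option, QZ_option, ← hedef]
      rcases eq_or_ne e 0 with he | he
      · simp only [he, zero_mul, Int.cast_zero, zero_add]
        exact (h c₀ hc₀2).1
      · constructor
        · intro hcon; exact absurd hcon (hnz he)
        · rintro ⟨ha, hq⟩
          exfalso; apply hS
          rcases lt_or_gt_of_ne he with helt | hegt
          · refine ⟨-e, c₀, ⟨by omega, by omega⟩, hc₀, by linarith, ?_⟩
            push_cast
            linarith
          · refine ⟨e, fun i => -(c₀ i), ⟨by omega, by omega⟩,
              fun i => by rw [abs_neg]; exact hc₀ i, ?_, ?_⟩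
            · rw [AZ_neg]; linarith
            · rw [QZ_neg]; linarith
    · intro m hm1 hmN
      rw [DZ_option, AZ_option, ← hedef]
      have h1 : (m:ℤ) ∣ L := by
        rw [hLdef]
        exact_mod_cast Int.natCast_dvd_natCast.mpr (Nat.dvd_factorial (by omega) hmN)
      have h2 : (m:ℤ) ∣ DZ c₀ v - AZ c₀ w := (h c₀ hc₀2).2 m hm1 (by nlinarith)
      have h3 : e * z + DZ c₀ v - (e * b.1 + AZ c₀ w)
          = e * Bd * L + (DZ c₀ v - AZ c₀ w) := by rw [hzdef]; ring
      rw [h3]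
      exact dvd_add (Dvd.dvd.mul_left h1 _) h2

lemma zrel_forth {N : ℕ} (hN : 1 ≤ N) {v : ι → ℤ} {w : ι → ℤ × ℚ}
    (h : ZRel (2 * N ^ 2) v w) (z : ℤ) :
    ∃ b : ℤ × ℚ, ZRel N (extO z v) (extO b w) := by
  by_cases hS : ∃ d : ℤ, ∃ c : ι → ℤ, (1 ≤ d ∧ d ≤ (N:ℤ)) ∧ (∀ i, |c i| ≤ (N:ℤ)) ∧
      d * z = DZ c v
  · obtain ⟨d, c, ⟨hd1, hdN⟩, hc, hz⟩ := hS
    have hcc : ∀ i, |c i| ≤ ((2*N^2:ℕ):ℤ) := fun i => (hc i).trans Nle2N2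
    have hdvdDA : d ∣ DZ c v - AZ c w := by
      have h2 := (h c hcc).2 d.toNat (by omega)
        (by have h4 : d.toNat ≤ N := by omega
            calc d.toNat ≤ N := h4
              _ ≤ 2 * N ^ 2 := by nlinarith)
      rwa [Int.toNat_of_nonneg (by omega)] at h2
    have hdvdA : d ∣ AZ c w := by
      have hdvdD : d ∣ DZ c v := ⟨z, hz.symm⟩
      have := dvd_sub hdvdD hdvdDA
      simpa using this
    obtain ⟨a, ha⟩ := hdvdA
    have hdQ0 : (d:ℚ) ≠ 0 := by
      have : d ≠ 0 := by omega
      exact_mod_cast this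
    refine ⟨(a, QZ c w / d), zrel_extend h hd1 hdN hc hz ha.symm ?_⟩
    field_simp
  · set ρ : ℚ := (N:ℚ) * (∑ i, |(w i).2|) + 1 with hρdef
    have hsum0 : 0 ≤ (N:ℚ) * (∑ i, |(w i).2|) := by positivity
    refine ⟨(z, ρ), ?_⟩
    intro c' hc'
    have hec : |c' none| ≤ (N:ℤ) := hc' none
    set e : ℤ := c' none with hedef
    obtain ⟨heL, heU⟩ := abs_le.mp hec
    set c₀ : ι → ℤ := fun i => c' (some i) with hc₀def
    have hc₀ : ∀ i, |c₀ i| ≤ (N:ℤ) := fun i => hc' (some i)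
    have hc₀2 : ∀ i, |c₀ i| ≤ ((2*N^2:ℕ):ℤ) := fun i => (hc₀ i).trans Nle2N2
    have hQbound : |QZ c₀ w| ≤ (N:ℚ) * ∑ i, |(w i).2| := by
      calc |QZ c₀ w| ≤ ∑ i, |(c₀ i : ℚ) * (w i).2| := Finset.abs_sum_le_sum_abs _ _
        _ ≤ ∑ i, (N:ℚ) * |(w i).2| := Finset.sum_le_sum (fun i _ => by
            rw [abs_mul]
            refine mul_le_mul_of_nonneg_right ?_ (abs_nonneg _)
            have := hc₀ i
            rw [← Int.cast_abs]
            exact_mod_cast this)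
        _ = (N:ℚ) * ∑ i, |(w i).2| := (Finset.mul_sum _ _ _).symm
    have hnzq : e ≠ 0 → (e:ℚ) * ρ + QZ c₀ w ≠ 0 := by
      intro he0 heq
      have hρ0 : (0:ℚ) ≤ ρ := by rw [hρdef]; positivity
      have h1 : ρ ≤ |(e:ℚ) * ρ| := by
        rw [abs_mul, abs_of_nonneg hρ0]
        refine le_mul_of_one_le_left hρ0 ?_
        have h5 : (1:ℤ) ≤ |e| := Int.one_le_abs he0
        rw [← Int.cast_abs]
        exact_mod_cast h5
      have h2 : (e:ℚ) * ρ = -QZ c₀ w := by linarith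
      rw [h2, abs_neg] at h1
      rw [hρdef] at h1
      linarith
    have hnz : e ≠ 0 → e * z + DZ c₀ v ≠ 0 := by
      intro he0 heq
      apply hS
      rcases lt_or_gt_of_ne he0 with helt | hegt
      · exact ⟨-e, c₀, ⟨by omega, by omega⟩, hc₀, by linarith⟩
      · exact ⟨e, fun i => -(c₀ i), ⟨by omega, by omega⟩,
          fun i => by rw [abs_neg]; exact hc₀ i, by rw [DZ_neg]; linarith⟩
    constructor
    · rw [DZ_option, AZ_option, QZ_option, ← hedef]
      rcases eq_or_ne e 0 with he | he
      · simp only [he, zero_mul, Int.cast_zero, zero_add]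
        exact (h c₀ hc₀2).1
      · constructor
        · intro hcon; exact absurd hcon (hnz he)
        · rintro ⟨ha, hq⟩
          exact absurd hq (hnzq he)
    · intro m hm1 hmN
      rw [DZ_option, AZ_option, ← hedef]
      have h2 : (m:ℤ) ∣ DZ c₀ v - AZ c₀ w := (h c₀ hc₀2).2 m hm1 (by nlinarith)
      have h3 : e * z + DZ c₀ v - (e * z + AZ c₀ w) = DZ c₀ v - AZ c₀ w := by ring
      rw [h3]
      exact h2

lemma zrel_mono {M N : ℕ} (hNM : N ≤ M) {v : ι → ℤ} {w : ι → ℤ × ℚ}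
    (h : ZRel M v w) : ZRel N v w := by
  intro c hc
  have hc' : ∀ i, |c i| ≤ (M:ℤ) := fun i => (hc i).trans (by exact_mod_cast hNM)
  exact ⟨(h c hc').1, fun m hm1 hmN => (h c hc').2 m hm1 (hmN.trans hNM)⟩

lemma zrel_init (N : ℕ) (v : ι → ℤ) : ZRel N v (fun i => ((v i, 0) : ℤ × ℚ)) := by
  intro c hc
  constructor
  · simp [DZ, AZ, QZ]
  · intro m _ _
    simp [DZ, AZ]

lemma zrel_equiv {κ : Type*} [Fintype κ] (e : κ ≃ ι) {N : ℕ} {v : ι → ℤ} {w : ι → ℤ × ℚ}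
    (h : ZRel N v w) : ZRel N (v ∘ e) (w ∘ e) := by
  intro c hc
  have hb : ∀ i, |c (e.symm i)| ≤ (N:ℤ) := fun i => hc _
  have h1 := h (c ∘ e.symm) hb
  have hD : DZ (c ∘ e.symm) v = DZ c (v ∘ e) := by
    rw [DZ, DZ]
    rw [← Equiv.sum_comp e (fun i => (c ∘ e.symm) i * v i)]
    simp
  have hA : AZ (c ∘ e.symm) w = AZ c (w ∘ e) := by
    rw [AZ, AZ]
    rw [← Equiv.sum_comp e (fun i => (c ∘ e.symm) i * (w i).1)]
    simp
  have hQ : QZ (c ∘ e.symm) w = QZ c (w ∘ e) := by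
    rw [QZ, QZ]
    rw [← Equiv.sum_comp e (fun i => ((c ∘ e.symm) i : ℚ) * (w i).2)]
    simp
  rw [hD, hA, hQ] at h1
  exact h1

end Steps


section Terms
variable {ι : Type*} [Fintype ι] [DecidableEq ι]

lemma DZ_sub' (c c' v : ι → ℤ) : DZ (fun i => c i - c' i) v = DZ c v - DZ c' v := by
  simp [DZ, sub_mul, Finset.sum_sub_distrib]

lemma AZ_sub' (c c' : ι → ℤ) (w : ι → ℤ × ℚ) :
    AZ (fun i => c i - c' i) w = AZ c w - AZ c' w := by
  simp [AZ, sub_mul, Finset.sum_sub_distrib]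

lemma QZ_sub' (c c' : ι → ℤ) (w : ι → ℤ × ℚ) :
    QZ (fun i => c i - c' i) w = QZ c w - QZ c' w := by
  simp [QZ, sub_mul, Finset.sum_sub_distrib]


lemma DZ_add (c c' v : ι → ℤ) : DZ (fun i => c i + c' i) v = DZ c v + DZ c' v := by
  simp [DZ, add_mul, Finset.sum_add_distrib]

lemma AZ_add (c c' : ι → ℤ) (w : ι → ℤ × ℚ) :
    AZ (fun i => c i + c' i) w = AZ c w + AZ c' w := by
  simp [AZ, add_mul, Finset.sum_add_distrib]

lemma QZ_add (c c' : ι → ℤ) (w : ι → ℤ × ℚ) :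
    QZ (fun i => c i + c' i) w = QZ c w + QZ c' w := by
  simp [QZ, add_mul, Finset.sum_add_distrib]

@[simp] lemma funMap_mul {G : Type*} [AddGroup G] (args : Fin 2 → G) :
    Language.Structure.funMap (L := Lgrp) GrpFunc.mul args = args 0 + args 1 := rfl

@[simp] lemma funMap_inv {G : Type*} [AddGroup G] (args : Fin 1 → G) :
    Language.Structure.funMap (L := Lgrp) GrpFunc.inv args = -(args 0) := rfl

@[simp] lemma funMap_one {G : Type*} [AddGroup G] (args : Fin 0 → G) :
    Language.Structure.funMap (L := Lgrp) GrpFunc.one args = 0 := rfl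

lemma term_eval (t : Lgrp.Term ι) :
    ∃ (c : ι → ℤ) (B : ℕ), (∀ i, |c i| ≤ (B : ℤ)) ∧
      (∀ v : ι → ℤ, t.realize v = DZ c v) ∧
      (∀ w : ι → ℤ × ℚ, t.realize w = (AZ c w, QZ c w)) := by
  induction t with
  | var i =>
      refine ⟨fun j => if j = i then 1 else 0, 1, ?_, ?_, ?_⟩
      · intro j; by_cases h : j = i <;> simp [h]
      · intro v
        simp [Language.Term.realize_var, Language.Term.realize_func, DZ, ite_mul, Finset.sum_ite_eq' Finset.univ i]
      · intro w
        have h1 : AZ (fun j => if j = i then 1 else 0) w = (w i).1 := by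
          simp [AZ, ite_mul, Finset.sum_ite_eq' Finset.univ i]
        have h2 : QZ (fun j => if j = i then 1 else 0) w = (w i).2 := by
          simp [QZ, apply_ite (fun x : ℤ => (x : ℚ)), ite_mul,
            Finset.sum_ite_eq' Finset.univ i]
        simp [Language.Term.realize_var, Language.Term.realize_func, h1, h2]
  | func f ts ih =>
      cases f with
      | mul =>
          obtain ⟨c₁, B₁, h11, h12, h13⟩ := ih 0
          obtain ⟨c₂, B₂, h21, h22, h23⟩ := ih 1
          refine ⟨fun i => c₁ i + c₂ i, B₁ + B₂, ?_, ?_, ?_⟩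
          · intro i
            calc |c₁ i + c₂ i| ≤ |c₁ i| + |c₂ i| := abs_add_le _ _
              _ ≤ (B₁ : ℤ) + B₂ := add_le_add (h11 i) (h21 i)
              _ = ((B₁ + B₂ : ℕ) : ℤ) := by push_cast; ring
          · intro v
            show (ts 0).realize v + (ts 1).realize v = _
            simp only [Language.Term.realize_var, Language.Term.realize_func, funMap_mul, h12, h22, DZ_add]
          · intro w
            show (ts 0).realize w + (ts 1).realize w = _
            simp only [Language.Term.realize_var, Language.Term.realize_func, funMap_mul, h13, h23, AZ_add, QZ_add,
              Prod.mk_add_mk]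
      | inv =>
          obtain ⟨c₁, B₁, h11, h12, h13⟩ := ih 0
          refine ⟨fun i => -(c₁ i), B₁, fun i => by rw [abs_neg]; exact h11 i, ?_, ?_⟩
          · intro v
            show -(ts 0).realize v = _
            simp only [Language.Term.realize_var, Language.Term.realize_func, funMap_inv, h12, DZ_neg]
          · intro w
            show -(ts 0).realize w = _
            simp only [Language.Term.realize_var, Language.Term.realize_func, funMap_inv, h13, AZ_neg, QZ_neg, Prod.neg_mk]
      | one =>
          refine ⟨fun _ => 0, 0, fun i => by simp, ?_, ?_⟩
          · intro v
            show (0:ℤ) = _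
            simp [Language.Term.realize_var, Language.Term.realize_func, DZ]
          · intro w
            show (0 : ℤ × ℚ) = _
            refine Prod.ext ?_ ?_ <;> simp [AZ, QZ]

end Terms

section Main

def sumOptEquiv (k n : ℕ) : (Fin k ⊕ Fin (n + 1)) ≃ Option (Fin k ⊕ Fin n) where
  toFun s := Sum.elim (fun i => some (Sum.inl i))
    (fun j => Fin.lastCases none (fun j' => some (Sum.inr j')) j) s
  invFun o := o.elim (Sum.inr (Fin.last n)) (Sum.map id Fin.castSucc)
  left_inv := by
    rintro (i | j)
    · rfl
    · refine Fin.lastCases ?_ (fun j' => ?_) j <;>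
        simp [Fin.lastCases_last, Fin.lastCases_castSucc]
  right_inv := by
    rintro (_ | (i | j)) <;>
      simp [Fin.lastCases_last, Fin.lastCases_castSucc]

lemma extO_comp_equiv {k n : ℕ} {α : Type*} (z : α) (v : Fin k → α) (xs : Fin n → α) :
    (extO z (Sum.elim v xs)) ∘ (sumOptEquiv k _) = Sum.elim v (Fin.snoc xs z) := by
  funext s
  rcases s with i | j
  · rfl
  · refine Fin.lastCases ?_ (fun j' => ?_) j
    · simp [sumOptEquiv, extO, Fin.snoc_last]
    · simp [sumOptEquiv, extO, Fin.snoc_castSucc, Fin.lastCases_castSucc]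

lemma main {k : ℕ} : ∀ {n : ℕ} (φ : Lgrp.BoundedFormula (Fin k) n),
    ∃ B : ℕ, 1 ≤ B ∧ ∀ N, B ≤ N → ∀ (v : Fin k → ℤ) (xs : Fin n → ℤ)
      (w : Fin k → ℤ × ℚ) (ys : Fin n → ℤ × ℚ),
      ZRel N (Sum.elim v xs) (Sum.elim w ys) →
      (φ.Realize v xs ↔ φ.Realize w ys) := by
  intro n φ
  induction φ with
  | falsum =>
      exact ⟨1, le_rfl, fun N _ v xs w ys _ => Iff.rfl⟩
  | equal t₁ t₂ =>
      obtain ⟨c₁, B₁, h11, h12, h13⟩ := term_eval t₁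
      obtain ⟨c₂, B₂, h21, h22, h23⟩ := term_eval t₂
      refine ⟨B₁ + B₂ + 1, by omega, fun N hN v xs w ys hrel => ?_⟩
      have hb : ∀ i, |c₁ i - c₂ i| ≤ (N : ℤ) := by
        intro i
        calc |c₁ i - c₂ i| ≤ |c₁ i| + |c₂ i| := abs_sub _ _
          _ ≤ (B₁ : ℤ) + B₂ := add_le_add (h11 i) (h21 i)
          _ ≤ (N : ℤ) := by exact_mod_cast Nat.le_of_succ_le hN
      have key := (hrel (fun i => c₁ i - c₂ i) hb).1
      show (Language.Term.realize (Sum.elim v xs) t₁ = Language.Term.realize (Sum.elim v xs) t₂) ↔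
        (Language.Term.realize (Sum.elim w ys) t₁ = Language.Term.realize (Sum.elim w ys) t₂)
      rw [h12, h22, h13, h23]
      simp only [Prod.mk.injEq]
      rw [← sub_eq_zero (a := DZ c₁ (Sum.elim v xs)),
        ← sub_eq_zero (a := AZ c₁ (Sum.elim w ys)),
        ← sub_eq_zero (a := QZ c₁ (Sum.elim w ys)),
        ← DZ_sub', ← AZ_sub', ← QZ_sub']
      exact key
  | rel r ts =>
      exact Empty.elim r
  | imp φ ψ ih1 ih2 =>
      obtain ⟨B₁, hB₁, h1⟩ := ih1
      obtain ⟨B₂, hB₂, h2⟩ := ih2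
      refine ⟨max B₁ B₂, le_trans hB₁ (le_max_left _ _), fun N hN v xs w ys hrel => ?_⟩
      have i1 := h1 N (le_trans (le_max_left _ _) hN) v xs w ys hrel
      have i2 := h2 N (le_trans (le_max_right _ _) hN) v xs w ys hrel
      show (φ.Realize v xs → ψ.Realize v xs) ↔ (φ.Realize w ys → ψ.Realize w ys)
      rw [i1, i2]
  | all φ ih =>
      obtain ⟨B', hB', hmain⟩ := ih
      refine ⟨2 * B' ^ 2, by nlinarith, fun N hN v xs w ys hrel => ?_⟩
      have hrelB : ZRel (2 * B' ^ 2) (Sum.elim v xs) (Sum.elim w ys) := zrel_mono hN hrel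
      rw [Language.BoundedFormula.realize_all, Language.BoundedFormula.realize_all]
      constructor
      · intro hall b
        obtain ⟨z, hz⟩ := zrel_back hB' hrelB b
        have h2 := zrel_equiv (sumOptEquiv k _) hz
        rw [show (extO z (Sum.elim v xs)) ∘ (sumOptEquiv k _) = _ from extO_comp_equiv z v xs,
          show (extO b (Sum.elim w ys)) ∘ (sumOptEquiv k _) = _ from extO_comp_equiv b w ys] at h2
        exact (hmain B' le_rfl v (Fin.snoc xs z) w (Fin.snoc ys b) h2).mp (hall z)
      · intro hall z
        obtain ⟨b, hb⟩ := zrel_forth hB' hrelB z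
        have h2 := zrel_equiv (sumOptEquiv k _) hb
        rw [show (extO z (Sum.elim v xs)) ∘ (sumOptEquiv k _) = _ from extO_comp_equiv z v xs,
          show (extO b (Sum.elim w ys)) ∘ (sumOptEquiv k _) = _ from extO_comp_equiv b w ys] at h2
        exact (hmain B' le_rfl v (Fin.snoc xs z) w (Fin.snoc ys b) h2).mpr (hall b)

end Main
end IntProdRatAux

/-- The map `x ↦ (x, 0) : ℤ → ℤ × ℚ` is an elementary embedding of `Lgrp`-structures
(Section 7 of the paper: every model of `Th(ℤ,+)` is of the form `G ⊕ ℚ^(κ)`;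
in particular `ℤ ⊕ ℚ` is an elementary extension of `ℤ`). -/
theorem int_into_int_prod_rat_elementary :
    ∀ (k : ℕ) (φ : Lgrp.Formula (Fin k)) (v : Fin k → ℤ),
      φ.Realize v ↔ φ.Realize (fun i => ((v i, 0) : ℤ × ℚ)) := by
  intro k φ v
  obtain ⟨B, hB1, h⟩ := IntProdRatAux.main (n := 0) φ
  have hrel : ∀ (xs : Fin 0 → ℤ) (ys : Fin 0 → ℤ × ℚ),
      IntProdRatAux.ZRel B (Sum.elim v xs)
        (Sum.elim (fun i => ((v i, 0) : ℤ × ℚ)) ys) := by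
    intro xs ys
    have heq : Sum.elim (fun i => ((v i, 0) : ℤ × ℚ)) ys =
        fun j => ((Sum.elim v xs j, 0) : ℤ × ℚ) := by
      funext s
      rcases s with i | j
      · rfl
      · exact j.elim0
    rw [heq]
    exact IntProdRatAux.zrel_init B (Sum.elim v xs)
  rw [Language.Formula.Realize, Language.Formula.Realize]
  exact h B le_rfl v _ (fun i => ((v i, 0) : ℤ × ℚ)) _ (hrel _ _)
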